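/- arXiv:math/0104023 — 2 statements merged into one kernel-verified Lean document; each statement's English description precedes it below -/
import Mathlib

section
/- Let f : M → N be a homomorphism of nilpotent groups such that the induced map f₊ : H₁(M,ℤ) → H₁(N,ℤ) on abelianizations is surjective. Then f is surjective. -/
/-!
Surjectivity on abelianizations says exactly that `f.range ⊔ [N, N] = N`, so it suffices that a
subgroup `H` of a nilpotent group with `H ⊔ [N, N] = N` is all of `N`. Induct on the nilpotency
class: the image of `H` in `N ⧸ Z(N)` satisfies the same hypothesis, hence `H ⊔ Z(N) = N`; but then
`H` is normal with abelian quotient (a quotient of `Z(N)`), so `[N, N] ≤ H`.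
-/

open Subgroup

namespace Subgroup

variable {G : Type*} [Group G] {H : Subgroup G}

theorem normal_of_sup_center_eq_top (hH : H ⊔ center G = ⊤) : H.Normal :=
  normalizer_eq_top_iff.mp <| top_le_iff.mp <|
    hH ▸ sup_le le_normalizer (center_le_normalizer (H : Set G))

theorem commutator_le_of_sup_center_eq_top (hH : H ⊔ center G = ⊤) : _root_.commutator G ≤ H :=
  have := normal_of_sup_center_eq_top hH
  Normal.commutator_le_of_self_sup_commutative_eq_top hH inferInstance

theorem eq_top_of_sup_commutator_eq_top [Group.IsNilpotent G]
    (hH : H ⊔ _root_.commutator G = ⊤) : H = ⊤ := by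
  revert H
  apply @Group.nilpotent_center_quotient_ind _ G _ _ <;> clear! G
  · intro G _ _ H _
    exact Subsingleton.elim _ _
  · intro G _ _ ih H hH
    have hπ := QuotientGroup.mk'_surjective (center G)
    have hmap : H.map (QuotientGroup.mk' (center G)) = ⊤ := by
      refine ih ?_
      rw [← map_top_of_surjective _ hπ, ← hH, map_sup, map_commutator_eq,
        MonoidHom.range_eq_top.mpr hπ, _root_.commutator_def]
    have hHZ : H ⊔ center G = ⊤ := by
      rw [← QuotientGroup.ker_mk' (center G), ← comap_map_eq, hmap, comap_top]
    rw [← hH, sup_eq_left.mpr (commutator_le_of_sup_center_eq_top hHZ)]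

end Subgroup

theorem MonoidHom.range_sup_commutator_eq_top {M N : Type*} [Group M] [Group N] (f : M →* N)
    (hf : Function.Surjective (Abelianization.map f)) : f.range ⊔ _root_.commutator N = ⊤ := by
  have : f.range.map Abelianization.of = ⊤ := by
    rw [← MonoidHom.range_comp, MonoidHom.range_eq_top]
    exact hf.comp QuotientGroup.mk_surjective
  rw [← Abelianization.ker_of, ← comap_map_eq, this, comap_top]

theorem stmt_1_general (M N : Type*) [Group M] [Group N]
    [Group.IsNilpotent N]
    (f : M →* N) (h : Function.Surjective (Abelianization.map f)) :
    Function.Surjective f :=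
  f.range_eq_top.mp (eq_top_of_sup_commutator_eq_top (f.range_sup_commutator_eq_top h))

/-- If `f : M → N` is a homomorphism of nilpotent groups inducing a surjection
on abelianizations (`H₁(-,ℤ)`), then `f` is surjective. -/
theorem stmt_1 (M N : Type*) [Group M] [Group N]
    [Group.IsNilpotent M] [Group.IsNilpotent N]
    (f : M →* N) (h : Function.Surjective (Abelianization.map f)) :
    Function.Surjective f :=
  stmt_1_general M N f h
end

section
/- Let A be a unital k-algebra with a two-sided ideal J, and let P = {x ∈ 1 + J : x invertible} (or more specifically, let P be a subgroup of the units of A contained in 1 + J). Define P^i = P ∩ (1 + J^i). Then [P^i, P^j] ⊆ P^{i+j} for all i, j ≥ 1. -/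
/-!
For units `x, y` one has `⁅x, y⁆ - 1 = (x y - y x) x⁻¹ y⁻¹` and
`x y - y x = (x - 1)(y - 1) - (y - 1)(x - 1) ∈ J^i J^j ⊆ J^(i+j)`. Since `J` is a right ideal,
so is `J^n` for `n ≥ 1`, which absorbs the factor `x⁻¹ y⁻¹`.
-/

open scoped commutatorElement

namespace Submodule

variable {R A : Type*}

theorem mul_mem_pow_of_forall_mul_mem [CommSemiring R] [Semiring A] [Algebra R A]
    {J : Submodule R A} (hJ : ∀ r : A, ∀ a ∈ J, a * r ∈ J) {n : ℕ} (hn : n ≠ 0) {a : A}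
    (ha : a ∈ J ^ n) (r : A) : a * r ∈ J ^ n := by
  obtain ⟨m, rfl⟩ := Nat.exists_eq_succ_of_ne_zero hn
  rw [pow_succ] at ha ⊢
  refine Submodule.mul_induction_on ha (fun b hb c hc ↦ ?_) (fun u v hu hv ↦ ?_)
  · rw [mul_assoc]
    exact mul_mem_mul hb (hJ r c hc)
  · rw [add_mul]
    exact add_mem hu hv

theorem mul_sub_mul_mem_pow_add [CommRing R] [Ring A] [Algebra R A] {J : Submodule R A}
    {i j : ℕ} {a b : A} (ha : a - 1 ∈ J ^ i) (hb : b - 1 ∈ J ^ j) :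
    a * b - b * a ∈ J ^ (i + j) := by
  have hab : (a - 1) * (b - 1) ∈ J ^ (i + j) := pow_add J i j ▸ mul_mem_mul ha hb
  have hba : (b - 1) * (a - 1) ∈ J ^ (i + j) :=
    add_comm j i ▸ pow_add J j i ▸ mul_mem_mul hb ha
  convert sub_mem hab hba using 1
  noncomm_ring

end Submodule

theorem Units.val_commutatorElement_sub_one {A : Type*} [Ring A] (x y : Aˣ) :
    ((⁅x, y⁆ : Aˣ) : A) - 1 = ((x : A) * y - (y : A) * x) * ((↑x⁻¹ : A) * ↑y⁻¹) := by
  simp [commutatorElement_def, sub_mul, mul_assoc]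

theorem stmt_4_general (k A : Type*) [Field k] [Ring A] [Algebra k A]
    (J : Submodule k A)
    (hJr : ∀ r : A, ∀ a ∈ J, a * r ∈ J)
    (i j : ℕ) (hi : 1 ≤ i)
    (x y : Aˣ)
    (hxi : (x : A) - 1 ∈ J ^ i) (hyj : (y : A) - 1 ∈ J ^ j) :
    ((⁅x, y⁆ : Aˣ) : A) - 1 ∈ J ^ (i + j) := by
  rw [Units.val_commutatorElement_sub_one]
  exact J.mul_mem_pow_of_forall_mul_mem hJr (by omega)
    (J.mul_sub_mul_mem_pow_add hxi hyj) _

/-- Let `A` be a unital `k`-algebra, `J ⊆ A` a two-sided ideal, and `P` a subgroup of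
`A^×` contained in `1 + J`.  With `P^i = P ∩ (1 + J^i)`, one has
`[P^i, P^j] ⊆ P^{i+j}`: the commutator of an element of `P^i` and an element of
`P^j` lies in `P^{i+j}`. -/
theorem stmt_4 (k A : Type*) [Field k] [Ring A] [Algebra k A]
    (J : Submodule k A)
    (hJl : ∀ r : A, ∀ a ∈ J, r * a ∈ J) (hJr : ∀ r : A, ∀ a ∈ J, a * r ∈ J)
    (P : Subgroup Aˣ) (hP : ∀ x ∈ P, (x : A) - 1 ∈ J)
    (i j : ℕ) (hi : 1 ≤ i) (hj : 1 ≤ j)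
    (x y : Aˣ) (hx : x ∈ P) (hy : y ∈ P)
    (hxi : (x : A) - 1 ∈ J ^ i) (hyj : (y : A) - 1 ∈ J ^ j) :
    ((⁅x, y⁆ : Aˣ) : A) - 1 ∈ J ^ (i + j) :=
  stmt_4_general k A J hJr i j hi x y hxi hyj
end
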